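/- arXiv:1111.7090 — 6 statements merged into one kernel-verified Lean document; each statement's English description precedes it below -/
import Mathlib

section
/- In any group operad, for every a ∈ G_1 and k ≥ 1, the element γ(a; e_k) lies in the center of G_k. -/
/-- Distributing a sigma type over a sum index. -/
def sumSigmaDistrib {α β : Type*} (P : α ⊕ β → Type*) :
    (Σ s, P s) ≃ (Σ a, P (Sum.inl a)) ⊕ (Σ b, P (Sum.inr b)) where
  toFun p :=
    match p with
    | ⟨Sum.inl a, x⟩ => Sum.inl ⟨a, x⟩
    | ⟨Sum.inr b, x⟩ => Sum.inr ⟨b, x⟩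
  invFun q :=
    match q with
    | Sum.inl ⟨a, x⟩ => ⟨Sum.inl a, x⟩
    | Sum.inr ⟨b, x⟩ => ⟨Sum.inr b, x⟩
  left_inv p := by rcases p with ⟨a | b, x⟩ <;> rfl
  right_inv q := by rcases q with ⟨a, x⟩ | ⟨b, x⟩ <;> rfl

/-- A sigma type over `Fin 1` is just its unique fiber. -/
def sigmaFin1 (Q : Fin 1 → Type*) : (Σ b : Fin 1, Q b) ≃ Q 0 where
  toFun p := Fin.cases (motive := fun b => Q b → Q 0) id (fun i => i.elim0) p.1 p.2
  invFun x := ⟨0, x⟩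
  left_inv := by rintro ⟨b, x⟩; fin_cases b; rfl
  right_inv x := rfl

/-- The order-preserving equivalence `(Σ i : Fin k, Fin (m i)) ≃ Fin (∑ i, m i)`. -/
def finSigmaEquiv : ∀ (k : ℕ) (m : Fin k → ℕ), (Σ i : Fin k, Fin (m i)) ≃ Fin (∑ i, m i)
  | 0, m => (Equiv.equivOfIsEmpty _ (Fin 0)).trans (finCongr (by simp))
  | k+1, m =>
      ((Equiv.sigmaCongrLeft (β := fun i => Fin (m i)) (finSumFinEquiv (m := k) (n := 1))).symm.trans
        ((sumSigmaDistrib _).trans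
          ((Equiv.sumCongr (finSigmaEquiv k fun a => m (finSumFinEquiv (Sum.inl a)))
              (sigmaFin1 _)).trans
            (finSumFinEquiv.trans (finCongr (by
              rw [Fin.sum_univ_castSucc]
              congr 1))))))

/-- Block composition of permutations: `k` blocks of sizes `m 0, …, m (k-1)` are permuted
according to `σ` and the `i`-th block is permuted internally by `τ i`.  This is the operadic
composition of the symmetric groups operad `𝒮`. -/
def blockComp {k : ℕ} {m : Fin k → ℕ} (σ : Equiv.Perm (Fin k))
    (τ : (i : Fin k) → Equiv.Perm (Fin (m i))) : Equiv.Perm (Fin (∑ i, m i)) :=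
  let e₂ : (Σ i : Fin k, Fin (m i)) ≃ Σ j : Fin k, Fin (m (σ.symm j)) :=
    Equiv.sigmaCongr σ fun i => (τ i).trans (finCongr (congrArg m (σ.symm_apply_apply i).symm))
  ((finSigmaEquiv k m).symm.trans e₂).trans
    ((finSigmaEquiv k fun j => m (σ.symm j)).trans (finCongr (Equiv.sum_comp σ.symm m)))

/-- A group operad: an operad `𝒢 = {G n}` of groups together with a morphism `π` to the
symmetric groups operad, such that the identity of `G 1` is the operadic unit and the
operadic composition `γ` is a crossed homomorphism. -/
structure GroupOperad (G : ℕ → Type) [∀ n, Group (G n)] where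
  π : ∀ n, G n →* Equiv.Perm (Fin n)
  γ : ∀ {k : ℕ} {m : Fin k → ℕ}, G k → ((i : Fin k) → G (m i)) → G (∑ i, m i)
  one_γ : ∀ {n : ℕ} (b : G n), γ (1 : G 1) (fun _ : Fin 1 => b) = cast (congrArg G (by simp)) b
  γ_one : ∀ {k : ℕ} (a : G k), γ a (fun _ : Fin k => (1 : G 1)) = cast (congrArg G (by simp)) a
  crossed : ∀ {k : ℕ} {m : Fin k → ℕ} (a a' : G k) (b b' : (i : Fin k) → G (m i)),
      γ (a * a') (fun i => b i * b' i) =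
        γ a b *
          cast (congrArg G (Equiv.sum_comp (π k a).symm m))
            (γ a' fun i => b' ((π k a).symm i))
  π_γ : ∀ {k : ℕ} {m : Fin k → ℕ} (a : G k) (b : (i : Fin k) → G (m i)),
      π (∑ i, m i) (γ a b) = blockComp (π k a) fun i => π (m i) (b i)

lemma cast_comm_lift {G : ℕ → Type} [∀ n, Group (G n)] {n k : ℕ} (h : n = k) (A : G n)
    (hA : ∀ c : G n, A * c = c * A) (b : G k) :
    cast (congrArg G h) A * b = b * cast (congrArg G h) A := by
  subst h; simpa using hA b

/-- In any group operad, for every `a ∈ G 1` and `k ≥ 1`, the element `γ(a; e_k)` lies in the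
center of `G k`. -/
theorem groupOperad_gamma_unit_mem_center (G : ℕ → Type) [∀ n, Group (G n)]
    (P : GroupOperad G) (a : G 1) (k : ℕ) (hk : 1 ≤ k) :
    cast (congrArg G (by simp : (∑ _ : Fin 1, k) = k))
        (P.γ a (fun _ : Fin 1 => (1 : G k))) ∈ Subgroup.center (G k) := by
  have h : (∑ _ : Fin 1, k) = k := by simp
  set A := P.γ a (fun _ : Fin 1 => (1 : G k)) with hA
  have key : ∀ c : G (∑ _ : Fin 1, k), A * c = c * A := by
    intro c
    set b : G k := cast (congrArg G h.symm).symm c with hb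
    have hcb : c = cast (congrArg G h.symm) b := by
      rw [hb, cast_cast, cast_eq]
    have e1 := P.crossed a 1 (fun _ : Fin 1 => (1 : G k)) (fun _ => b)
    have e2 := P.crossed 1 a (fun _ : Fin 1 => b) (fun _ => (1 : G k))
    simp only [mul_one, one_mul] at e1 e2
    rw [P.one_γ] at e1 e2
    rw [e1] at e2
    rw [hcb]
    exact e2
  rw [Subgroup.mem_center_iff]
  intro b
  exact (cast_comm_lift h A key b).symm
end

section
/- The symmetric groups operad 𝒮 has no proper sub group operad: its only sub group operads are the trivial group operad 𝒥 and 𝒮 itself. -/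
/-- A sub group operad of the symmetric groups operad `𝒮`: a sequence of subgroups
`H n ≤ S n` closed under the operadic (block) composition. -/
structure PermSubOperad where
  H : ∀ n, Subgroup (Equiv.Perm (Fin n))
  γ_mem : ∀ {k : ℕ} {m : Fin k → ℕ} (σ : Equiv.Perm (Fin k))
      (τ : (i : Fin k) → Equiv.Perm (Fin (m i))),
      σ ∈ H k → (∀ i, τ i ∈ H (m i)) → blockComp σ τ ∈ H (∑ i, m i)

/-! A nontrivial permutation `σ ∈ H n` has an inversion `i < j`, `σ j < σ i`. Composing `σ` with
blocks of size one at `i` and `j` and of size zero elsewhere keeps only the relative order of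
`σ i` and `σ j`, so it is the transposition of `S₂`, which therefore lies in `H 2`. Inserting that
transposition as one block among blocks of size one gives every adjacent transposition of
`S_{k+1}`, and these generate `S_{k+1}`. -/

theorem sumSigmaDistrib_eq_equiv_sumSigmaDistrib {α β : Type*} (P : α ⊕ β → Type*) :
    sumSigmaDistrib P = Equiv.sumSigmaDistrib P := by
  ext ⟨a | b, x⟩ <;> rfl

theorem sigmaFin1_eq_uniqueSigma (Q : Fin 1 → Type*) : sigmaFin1 Q = Equiv.uniqueSigma Q := by
  ext ⟨b, x⟩
  fin_cases b
  rfl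

theorem finSigmaEquiv_eq_finSigmaFinEquiv : ∀ (k : ℕ) (m : Fin k → ℕ),
    finSigmaEquiv k m = finSigmaFinEquiv
  | 0, m => Subsingleton.elim _ _
  | k + 1, m => by
    rw [finSigmaEquiv, finSigmaFinEquiv, finSigmaEquiv_eq_finSigmaFinEquiv k,
      sumSigmaDistrib_eq_equiv_sumSigmaDistrib, sigmaFin1_eq_uniqueSigma]
    rfl

open Finset Equiv

theorem finSigmaEquiv_val {k : ℕ} (m : Fin k → ℕ) (i : Fin k) (x : Fin (m i)) :
    (finSigmaEquiv k m ⟨i, x⟩ : ℕ) = ∑ j ∈ Iio i, m j + x := by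
  rw [finSigmaEquiv_eq_finSigmaFinEquiv, finSigmaFinEquiv_apply]
  congr 1
  have hIio : Iio i = univ.map (Fin.castLEEmb i.is_lt.le) := by
    ext j
    simp only [mem_Iio, mem_map, mem_univ, true_and]
    exact ⟨fun hj => ⟨⟨j, hj⟩, rfl⟩, by rintro ⟨l, rfl⟩; exact l.is_lt⟩
  rw [hIio, sum_map]
  rfl

theorem finSigmaEquiv_lt_finSigmaEquiv {k : ℕ} (m : Fin k → ℕ) {i j : Fin k} (hij : i < j)
    (x : Fin (m i)) (y : Fin (m j)) : finSigmaEquiv k m ⟨i, x⟩ < finSigmaEquiv k m ⟨j, y⟩ := by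
  have hsum : ∑ l ∈ Iio i, m l + m i ≤ ∑ l ∈ Iio j, m l := by
    rw [add_comm, ← sum_insert (by simp)]
    exact sum_le_sum_of_subset fun l hl => by
      simp only [mem_insert, mem_Iio] at hl ⊢
      rcases hl with rfl | hl
      exacts [hij, hl.trans hij]
  rw [Fin.lt_def, finSigmaEquiv_val, finSigmaEquiv_val]
  omega

theorem blockComp_apply_finSigmaEquiv {k : ℕ} {m : Fin k → ℕ} (σ : Perm (Fin k))
    (τ : (i : Fin k) → Perm (Fin (m i))) (i : Fin k) (x : Fin (m i)) :
    blockComp σ τ (finSigmaEquiv k m ⟨i, x⟩) =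
      finCongr (sum_comp σ.symm m) (finSigmaEquiv k (fun j => m (σ.symm j))
        ⟨σ i, finCongr (by rw [σ.symm_apply_apply]) (τ i x)⟩) := by
  simp only [blockComp, trans_apply, symm_apply_apply]
  rfl

theorem blockComp_finSigmaEquiv_lt {k : ℕ} {m : Fin k → ℕ} (σ : Perm (Fin k))
    (τ : (i : Fin k) → Perm (Fin (m i))) {i j : Fin k} (h : σ i < σ j) (x : Fin (m i))
    (y : Fin (m j)) :
    blockComp σ τ (finSigmaEquiv k m ⟨i, x⟩) < blockComp σ τ (finSigmaEquiv k m ⟨j, y⟩) := by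
  simp only [blockComp_apply_finSigmaEquiv, finCongr_apply, Fin.cast_lt_cast]
  exact finSigmaEquiv_lt_finSigmaEquiv _ h _ _

theorem blockComp_one {k : ℕ} {m : Fin k → ℕ} (τ : (i : Fin k) → Perm (Fin (m i))) :
    blockComp 1 τ = (finSigmaEquiv k m).permCongr (sigmaCongrRight τ) := by
  ext y
  obtain ⟨⟨i, x⟩, rfl⟩ := (finSigmaEquiv k m).surjective y
  rw [permCongr_apply, symm_apply_apply, blockComp_apply_finSigmaEquiv]
  rfl

theorem Equiv.Perm.exists_lt_and_apply_lt_of_ne_one {n : ℕ} {σ : Perm (Fin n)} (hσ : σ ≠ 1) :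
    ∃ i j, i < j ∧ σ j < σ i := by
  by_contra! hmono
  have hσ' : StrictMono σ := fun i j hij =>
    lt_of_le_of_ne (hmono i j hij) (σ.injective.ne hij.ne)
  exact hσ <| Equiv.ext fun i => DFunLike.congr_fun
    (Subsingleton.elim (hσ'.orderIsoOfSurjective σ σ.surjective) (OrderIso.refl _)) i

theorem sigmaCongrRight_mulSingle_swap {α : Type*} [DecidableEq α] {β : α → Type*}
    [∀ a, DecidableEq (β a)] (a : α) (x y : β a) :
    sigmaCongrRight (Pi.mulSingle (M := fun a => Perm (β a)) a (swap x y)) =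
      swap ⟨a, x⟩ ⟨a, y⟩ := by
  refine Equiv.ext fun ⟨b, z⟩ => ?_
  by_cases hb : b = a
  · subst hb
    rw [sigmaCongrRight_apply, Pi.mulSingle_eq_same, sigma_mk_injective.swap_apply]
  · rw [sigmaCongrRight_apply, Pi.mulSingle_eq_of_ne hb, swap_apply_of_ne_of_ne]
    exacts [rfl, fun h => hb (Sigma.mk.inj_iff.mp h).1, fun h => hb (Sigma.mk.inj_iff.mp h).1]

namespace PermSubOperad

variable (S : PermSubOperad)

theorem permCongr_finCongr_mem {a b : ℕ} (h : a = b) {ρ : Perm (Fin a)} (hρ : ρ ∈ S.H a) :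
    (finCongr h).permCongr ρ ∈ S.H b := by
  subst h
  convert hρ
  ext
  simp

theorem swap_mem_of_ne_one {n : ℕ} {σ : Perm (Fin n)} (hσ : σ ∈ S.H n) (hne : σ ≠ 1) :
    swap (0 : Fin 2) 1 ∈ S.H 2 := by
  obtain ⟨i, j, hij, hσij⟩ := Perm.exists_lt_and_apply_lt_of_ne_one hne
  set m : Fin n → ℕ := fun l => if l ∈ ({i, j} : Finset (Fin n)) then 1 else 0
  have hM : ∑ l, m l = 2 := by
    simp only [m, sum_ite_mem, univ_inter, sum_const, card_pair hij.ne, smul_eq_mul, mul_one]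
  set ρ := (finCongr hM).permCongr (blockComp σ fun _ => 1)
  have hρ : ρ ∈ S.H 2 := S.permCongr_finCongr_mem hM (S.γ_mem σ _ hσ fun _ => one_mem _)
  have hρ1 : ρ ≠ 1 := by
    intro h1
    have hfix : ∀ x, blockComp σ (fun _ => 1) x = x := fun x => (finCongr hM).injective <| by
      simpa [ρ] using DFunLike.congr_fun h1 (finCongr hM x)
    have hi : 0 < m i := by simp [m]
    have hj : 0 < m j := by simp [m]
    have hlt := finSigmaEquiv_lt_finSigmaEquiv m hij ⟨0, hi⟩ ⟨0, hj⟩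
    have hgt := blockComp_finSigmaEquiv_lt σ (fun _ => 1) hσij ⟨0, hj⟩ ⟨0, hi⟩
    rw [hfix, hfix] at hgt
    exact lt_asymm hlt hgt
  have hS2 : ∀ ρ : Perm (Fin 2), ρ = 1 ∨ ρ = swap 0 1 := by decide
  exact (hS2 ρ).resolve_left hρ1 ▸ hρ

theorem swap_castSucc_succ_mem (hsw : swap (0 : Fin 2) 1 ∈ S.H 2) {k : ℕ} (t : Fin k) :
    swap t.castSucc t.succ ∈ S.H (k + 1) := by
  set m : Fin k → ℕ := fun i => if i = t then 2 else 1
  have hmt : 2 = m t := by simp [m]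
  have hM : ∑ i, m i = k + 1 := by
    have hm : ∀ i, m i = 1 + if i = t then 1 else 0 := fun i => by
      simp only [m]
      split_ifs <;> rfl
    simp [hm, sum_add_distrib]
  set τ := Pi.mulSingle (M := fun i => Perm (Fin (m i))) t ((finCongr hmt).permCongr (swap 0 1))
  have hτ : ∀ i, τ i ∈ S.H (m i) := by
    intro i
    by_cases hi : i = t
    · subst hi
      simpa only [τ, Pi.mulSingle_eq_same] using S.permCongr_finCongr_mem hmt hsw
    · simpa only [τ, Pi.mulSingle_eq_of_ne hi] using one_mem _
  have hval : ∀ x : Fin (m t), (finCongr hM (finSigmaEquiv k m ⟨t, x⟩) : ℕ) = t + x := by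
    intro x
    rw [finCongr_apply, Fin.val_cast, finSigmaEquiv_val,
      sum_congr rfl fun j hj => if_neg (mem_Iio.mp hj).ne, sum_const, Fin.card_Iio, smul_eq_mul,
      mul_one]
  convert S.permCongr_finCongr_mem hM (S.γ_mem 1 τ (one_mem _) hτ) using 1
  simp only [blockComp_one, τ, permCongr_def, symm_trans_swap_trans, sigmaCongrRight_mulSingle_swap]
  congr 1 <;> ext <;> rw [hval] <;> simp

theorem eq_top_of_swap_mem (hsw : swap (0 : Fin 2) 1 ∈ S.H 2) (n : ℕ) : S.H n = ⊤ := by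
  cases n with
  | zero => exact Subsingleton.elim _ _
  | succ k =>
    have hle : Submonoid.closure (Set.range fun t : Fin k => swap t.castSucc t.succ) ≤
        (S.H (k + 1)).toSubmonoid :=
      Submonoid.closure_le.mpr (by rintro _ ⟨t, rfl⟩; exact S.swap_castSucc_succ_mem hsw t)
    rw [Perm.mclosure_swap_castSucc_succ] at hle
    exact eq_top_iff.mpr fun x _ => hle (Submonoid.mem_top x)

end PermSubOperad

/-- The symmetric groups operad `𝒮` has no proper sub group operad: its only sub group
operads are the trivial group operad `𝒥` and `𝒮` itself. -/
theorem symmetricOperad_no_proper_subOperad (S : PermSubOperad) :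
    (∀ n, S.H n = ⊥) ∨ (∀ n, S.H n = ⊤) := by
  refine or_iff_not_imp_left.mpr fun hbot => ?_
  obtain ⟨n, hn⟩ := not_forall.mp hbot
  obtain ⟨σ, hσ, hne⟩ := (S.H n).bot_or_exists_ne_one.resolve_left hn
  exact S.eq_top_of_swap_mem (S.swap_mem_of_ne_one hσ hne)
end

section
/- For a topological operad 𝒞, there exists a basepoint of 𝒞 if and only if there exists a ∈ 𝒞(2) with d_1 a ∼ d_2 a ∼ 1 in 𝒞(1) and γ(a; 1, a) ∼ γ(a; a, 1), where ∼ denotes lying in the same path component. -/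
/-- A topological operad `𝒞`: spaces `{𝒞 n}` with `𝒞 0` a point, a unit `1 ∈ 𝒞 1`, and
continuous, associative, unital composition maps `γ`. -/
structure TopOperad (C : ℕ → Type) [∀ n, TopologicalSpace (C n)] [Unique (C 0)] where
  one : C 1
  γ : ∀ {k : ℕ} {m : Fin k → ℕ}, C k → ((i : Fin k) → C (m i)) → C (∑ i, m i)
  continuous_γ : ∀ (k : ℕ) (m : Fin k → ℕ),
      Continuous fun p : C k × ((i : Fin k) → C (m i)) => γ p.1 p.2
  one_γ : ∀ {n : ℕ} (a : C n), γ one (fun _ : Fin 1 => a) = cast (congrArg C (by simp)) a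
  γ_one : ∀ {k : ℕ} (a : C k), γ a (fun _ : Fin k => one) = cast (congrArg C (by simp)) a
  assoc : ∀ {k : ℕ} {m : Fin k → ℕ} {n : Fin (∑ i, m i) → ℕ}
      (a : C k) (b : (i : Fin k) → C (m i)) (c : (j : Fin (∑ i, m i)) → C (n j)),
      γ (γ a b) c =
        cast (congrArg C (by
          rw [← Equiv.sum_comp (finSigmaEquiv k m) n, ← Finset.univ_sigma_univ,
            Finset.sum_sigma]))
          (γ a fun i => γ (b i) fun x => c (finSigmaEquiv k m ⟨i, x⟩))


theorem fse21_00 : ((finSigmaEquiv 2 ![2, 1]) ⟨⟨0, by decide⟩, ⟨0, by decide⟩⟩).val = 0 := by decide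
theorem fse21_01 : ((finSigmaEquiv 2 ![2, 1]) ⟨⟨0, by decide⟩, ⟨1, by decide⟩⟩).val = 1 := by decide
theorem fse21_10 : ((finSigmaEquiv 2 ![2, 1]) ⟨⟨1, by decide⟩, ⟨0, by decide⟩⟩).val = 2 := by decide
theorem fse12_00 : ((finSigmaEquiv 2 ![1, 2]) ⟨⟨0, by decide⟩, ⟨0, by decide⟩⟩).val = 0 := by decide
theorem fse12_10 : ((finSigmaEquiv 2 ![1, 2]) ⟨⟨1, by decide⟩, ⟨0, by decide⟩⟩).val = 1 := by decide
theorem fse12_11 : ((finSigmaEquiv 2 ![1, 2]) ⟨⟨1, by decide⟩, ⟨1, by decide⟩⟩).val = 2 := by decide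

section OperadAux
set_option linter.unusedSectionVars false

variable {C : ℕ → Type} [∀ n, TopologicalSpace (C n)] [Unique (C 0)]

/-- Heterogeneous "joined" relation across the grading of an operad. -/
def HJ (C : ℕ → Type) [∀ n, TopologicalSpace (C n)] {p q : ℕ} (x : C p) (y : C q) : Prop :=
  ∃ h : p = q, Joined (cast (congrArg C h) x) y

theorem HJ.refl {p : ℕ} (x : C p) : HJ C x x := ⟨rfl, Joined.refl x⟩

theorem HJ.symm {p q : ℕ} {x : C p} {y : C q} : HJ C x y → HJ C y x := by
  rintro ⟨rfl, j⟩; exact ⟨rfl, j.symm⟩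

theorem HJ.trans {p q r : ℕ} {x : C p} {y : C q} {z : C r} :
    HJ C x y → HJ C y z → HJ C x z := by
  rintro ⟨rfl, j⟩ ⟨rfl, j'⟩; exact ⟨rfl, j.trans j'⟩

theorem HJ.joined {p : ℕ} {x y : C p} (h : HJ C x y) : Joined x y := by
  obtain ⟨h', j⟩ := h; exact j

theorem hj_cast {p p' : ℕ} (h : p = p') (x : C p) : HJ C (cast (congrArg C h) x) x := by
  subst h; exact HJ.refl x

theorem hj_e (e : ∀ k, C k) {n n' : ℕ} (h : n = n') : HJ C (e n) (e n') := by
  subst h; exact HJ.refl _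

theorem hj_zero {s t : ℕ} (hs : s = 0) (ht : t = 0) (u : C s) (v : C t) : HJ C u v := by
  subst hs; subst ht
  exact ⟨rfl, by rw [Subsingleton.elim u v]; exact Joined.refl v⟩

theorem hj_joined_cast {p q n : ℕ} (hp : p = n) (hq : q = n) {x : C p} {y : C q}
    (h : HJ C x y) : Joined (cast (congrArg C hp) x) (cast (congrArg C hq) y) := by
  subst hp; subst hq
  exact h.joined

theorem hj_of_joined_cast {p q n : ℕ} (hp : p = n) (hq : q = n) {x : C p} {y : C q}
    (j : Joined (cast (congrArg C hp) x) (cast (congrArg C hq) y)) : HJ C x y := by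
  subst hp; subst hq
  exact ⟨rfl, j⟩

variable (Q : TopOperad C)

theorem joined_γ {k : ℕ} {m : Fin k → ℕ} {x x' : C k} {B B' : ∀ i, C (m i)}
    (hx : Joined x x') (hB : ∀ i, Joined (B i) (B' i)) :
    Joined (Q.γ x B) (Q.γ x' B') :=
  ⟨(hx.somePath.prod (Path.pi fun i => (hB i).somePath)).map (Q.continuous_γ k m)⟩

theorem hj_γ {k k' : ℕ} (hk : k = k') {m : Fin k → ℕ} {m' : Fin k' → ℕ}
    {x : C k} {x' : C k'} {B : ∀ i, C (m i)} {B' : ∀ i, C (m' i)}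
    (hx : HJ C x x') (hB : ∀ i : Fin k, HJ C (B i) (B' (finCongr hk i))) :
    HJ C (Q.γ x B) (Q.γ x' B') := by
  subst hk
  have hm : m = m' := funext fun i => ((hB i).1 : m i = m' i)
  subst hm
  exact ⟨rfl, joined_γ Q hx.joined fun i => (hB i).joined⟩

theorem hj_assoc {k : ℕ} {m : Fin k → ℕ} {n : Fin (∑ i, m i) → ℕ}
    (x : C k) (b : ∀ i, C (m i)) (c : ∀ j, C (n j)) :
    HJ C (Q.γ (Q.γ x b) c)
      (Q.γ x fun i => Q.γ (b i) fun t => c (finSigmaEquiv k m ⟨i, t⟩)) := by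
  rw [Q.assoc]
  exact hj_cast (by rw [← Equiv.sum_comp (finSigmaEquiv k m) n, ← Finset.univ_sigma_univ,
    Finset.sum_sigma]) _

theorem hj_one_γ {n : ℕ} (x : C n) : HJ C (Q.γ Q.one (fun _ : Fin 1 => x)) x := by
  rw [Q.one_γ]; exact hj_cast (by simp) _

theorem hj_γ_one {m : Fin 1 → ℕ} (B : ∀ i : Fin 1, C (m i)) :
    HJ C (Q.γ Q.one B) (B 0) := by
  refine (hj_γ Q rfl (m' := fun _ : Fin 1 => m 0) (B' := fun _ => B 0)
    (HJ.refl Q.one) ?_).trans (hj_one_γ Q (B 0))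
  intro i
  have h0 : i = 0 := Subsingleton.elim i 0
  subst h0
  exact HJ.refl _

theorem hj_γ_zeroary {m : Fin 0 → ℕ} (x : C 0) (B : ∀ i, C (m i)) {t : ℕ}
    (ht : t = 0) (v : C t) : HJ C (Q.γ x B) v :=
  hj_zero (by simp) ht _ v

/-- The two-element family `(x, y)`. -/
def pfam {p q : ℕ} (x : C p) (y : C q) : ∀ i : Fin 2, C (![p, q] i) :=
  Fin.cons x (Fin.cons y fun j => j.elim0)

theorem sum2 (p q : ℕ) : (∑ i, ![p, q] i) = p + q := by simp [Fin.sum_univ_two]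

/-- Binary multiplication induced by `a ∈ C 2`. -/
def mulA (a : C 2) {p q : ℕ} (x : C p) (y : C q) : C (p + q) :=
  cast (congrArg C (sum2 p q)) (Q.γ (m := ![p, q]) a (pfam x y))

theorem hj_mulA (a : C 2) {p q : ℕ} (x : C p) (y : C q) :
    HJ C (mulA Q a x y) (Q.γ (m := ![p, q]) a (pfam x y)) := hj_cast (sum2 p q) _

theorem mulA_congr {a : C 2} {p p' q q' : ℕ} {x : C p} {x' : C p'} {y : C q} {y' : C q'}
    (h : HJ C x x') (h' : HJ C y y') : HJ C (mulA Q a x y) (mulA Q a x' y') := by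
  obtain ⟨rfl, jx⟩ := h
  obtain ⟨rfl, jy⟩ := h'
  refine (hj_mulA Q a x y).trans (((hj_γ Q rfl (HJ.refl a) ?_).trans
    (hj_mulA Q a x' y').symm))
  intro i
  fin_cases i
  · exact ⟨rfl, jx⟩
  · exact ⟨rfl, jy⟩

end OperadAux


section OperadMain
set_option linter.unusedSectionVars false

variable {C : ℕ → Type} [∀ n, TopologicalSpace (C n)] [Unique (C 0)]
variable (Q : TopOperad C) (a : C 2)

theorem unit_left {p : ℕ} (x : C p)
    (h1 : HJ C (Q.γ (m := ![0, 1]) a (pfam (default : C 0) Q.one)) Q.one) :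
    HJ C (Q.γ (m := ![0, p]) a (pfam (default : C 0) x)) x := by
  have A := hj_assoc Q (n := fun _ => p) a (pfam (default : C 0) Q.one) (fun _ => x)
  have B : HJ C (Q.γ (m := ![0, p]) a (pfam (default : C 0) x))
      (Q.γ a fun i => Q.γ ((pfam (default : C 0) Q.one) i)
        fun t => (fun _ => x) (finSigmaEquiv 2 ![0, 1] ⟨i, t⟩)) := by
    refine hj_γ Q rfl (HJ.refl a) ?_
    intro i
    fin_cases i
    · exact (hj_γ_zeroary Q _ _ rfl _).symm
    · exact (hj_one_γ Q x).symm
  have Cc : HJ C (Q.γ (Q.γ (m := ![0, 1]) a (pfam (default : C 0) Q.one)) (fun _ => x))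
      (Q.γ Q.one (fun _ : Fin 1 => x)) := by
    refine hj_γ Q (by simp [Fin.sum_univ_two]) h1 ?_
    intro j
    exact HJ.refl x
  exact B.trans (A.symm.trans (Cc.trans (hj_one_γ Q x)))

theorem unit_right {p : ℕ} (x : C p)
    (h2 : HJ C (Q.γ (m := ![1, 0]) a (pfam Q.one (default : C 0))) Q.one) :
    HJ C (Q.γ (m := ![p, 0]) a (pfam x (default : C 0))) x := by
  have A := hj_assoc Q (n := fun _ => p) a (pfam Q.one (default : C 0)) (fun _ => x)
  have B : HJ C (Q.γ (m := ![p, 0]) a (pfam x (default : C 0)))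
      (Q.γ a fun i => Q.γ ((pfam Q.one (default : C 0)) i)
        fun t => (fun _ => x) (finSigmaEquiv 2 ![1, 0] ⟨i, t⟩)) := by
    refine hj_γ Q rfl (HJ.refl a) ?_
    intro i
    fin_cases i
    · exact (hj_one_γ Q x).symm
    · exact (hj_γ_zeroary Q _ _ rfl _).symm
  have Cc : HJ C (Q.γ (Q.γ (m := ![1, 0]) a (pfam Q.one (default : C 0))) (fun _ => x))
      (Q.γ Q.one (fun _ : Fin 1 => x)) := by
    refine hj_γ Q (by simp [Fin.sum_univ_two]) h2 ?_
    intro j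
    exact HJ.refl x
  exact B.trans (A.symm.trans (Cc.trans (hj_one_γ Q x)))

/-- The three-element family `(x, y, z)`. -/
def tfam {p q r : ℕ} (x : C p) (y : C q) (z : C r) : ∀ i : Fin 3, C (![p, q, r] i) :=
  Fin.cons x (Fin.cons y (Fin.cons z fun j => j.elim0))

theorem mulA_assoc
    (h3 : HJ C (Q.γ (m := ![1, 2]) a (pfam Q.one a)) (Q.γ (m := ![2, 1]) a (pfam a Q.one)))
    {p q r : ℕ} (x : C p) (y : C q) (z : C r) :
    HJ C (mulA Q a (mulA Q a x y) z) (mulA Q a x (mulA Q a y z)) := by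
  have h23 : (∑ i, (![2, 1] : Fin 2 → ℕ) i) = 3 := by simp [Fin.sum_univ_two]
  have h12 : (∑ i, (![1, 2] : Fin 2 → ℕ) i) = 3 := by simp [Fin.sum_univ_two]
  have key : ∀ {u : Fin 3} (w : Fin 3), u = w → ∀ (v : C (![p, q, r] w)),
      tfam x y z w = v → HJ C (tfam x y z u) v := by
    rintro u w rfl v rfl
    exact HJ.refl _
  -- left side
  have AL := hj_assoc Q (n := fun j => ![p, q, r] (finCongr h23 j)) a (pfam a Q.one)
    (fun j => tfam x y z (finCongr h23 j))
  have BL : HJ C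
      (Q.γ a fun i => Q.γ ((pfam a Q.one) i)
        fun t => tfam x y z (finCongr h23 (finSigmaEquiv 2 ![2, 1] ⟨i, t⟩)))
      (Q.γ (m := ![∑ i, (![p, q] : Fin 2 → ℕ) i, r]) a
        (pfam (Q.γ (m := ![p, q]) a (pfam x y)) z)) := by
    refine hj_γ Q rfl (HJ.refl a) ?_
    intro i
    fin_cases i
    · refine hj_γ Q rfl (HJ.refl a) ?_
      intro t
      fin_cases t
      · exact key 0 (Fin.ext fse21_00) x rfl
      · exact key 1 (Fin.ext fse21_01) y rfl
    · exact (hj_γ_one Q _).trans (key 2 (Fin.ext fse21_10) z rfl)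
  -- right side
  have AR := hj_assoc Q (n := fun j => ![p, q, r] (finCongr h12 j)) a (pfam Q.one a)
    (fun j => tfam x y z (finCongr h12 j))
  have BR : HJ C
      (Q.γ a fun i => Q.γ ((pfam Q.one a) i)
        fun t => tfam x y z (finCongr h12 (finSigmaEquiv 2 ![1, 2] ⟨i, t⟩)))
      (Q.γ (m := ![p, ∑ i, (![q, r] : Fin 2 → ℕ) i]) a
        (pfam x (Q.γ (m := ![q, r]) a (pfam y z)))) := by
    refine hj_γ Q rfl (HJ.refl a) ?_
    intro i
    fin_cases i
    · exact (hj_γ_one Q _).trans (key 0 (Fin.ext fse12_00) x rfl)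
    · refine hj_γ Q rfl (HJ.refl a) ?_
      intro t
      fin_cases t
      · exact key 1 (Fin.ext fse21_01) y rfl
      · exact key 2 (Fin.ext fse12_11) z rfl
  -- link
  have X : HJ C
      (Q.γ (Q.γ (m := ![2, 1]) a (pfam a Q.one)) (fun j => tfam x y z (finCongr h23 j)))
      (Q.γ (Q.γ (m := ![1, 2]) a (pfam Q.one a)) (fun j => tfam x y z (finCongr h12 j))) := by
    refine hj_γ Q (h23.trans h12.symm) h3.symm ?_
    intro j
    exact HJ.refl _
  -- outer translations
  have T1 : HJ C (mulA Q a (mulA Q a x y) z)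
      (Q.γ (m := ![∑ i, (![p, q] : Fin 2 → ℕ) i, r]) a
        (pfam (Q.γ (m := ![p, q]) a (pfam x y)) z)) := by
    refine (hj_mulA Q a _ _).trans (hj_γ Q (by simp [Fin.sum_univ_two]) (HJ.refl a) ?_)
    intro i
    fin_cases i
    · exact hj_mulA Q a x y
    · exact HJ.refl z
  have T2 : HJ C (mulA Q a x (mulA Q a y z))
      (Q.γ (m := ![p, ∑ i, (![q, r] : Fin 2 → ℕ) i]) a
        (pfam x (Q.γ (m := ![q, r]) a (pfam y z)))) := by
    refine (hj_mulA Q a _ _).trans (hj_γ Q (by simp [Fin.sum_univ_two]) (HJ.refl a) ?_)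
    intro i
    fin_cases i
    · exact HJ.refl x
    · exact hj_mulA Q a y z
  exact T1.trans (BL.symm.trans (AL.symm.trans (X.trans (AR.trans (BR.trans T2.symm)))))

/-- The canonical basepoint candidate sequence generated by `a`. -/
def eSeq : ∀ k, C k
  | 0 => default
  | 1 => Q.one
  | (k + 2) => mulA Q a (p := k + 1) (q := 1) (eSeq (k + 1)) Q.one

theorem e_mul
    (h1 : HJ C (Q.γ (m := ![0, 1]) a (pfam (default : C 0) Q.one)) Q.one)
    (h2 : HJ C (Q.γ (m := ![1, 0]) a (pfam Q.one (default : C 0))) Q.one)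
    (h3 : HJ C (Q.γ (m := ![1, 2]) a (pfam Q.one a)) (Q.γ (m := ![2, 1]) a (pfam a Q.one))) :
    ∀ (q p : ℕ), HJ C (mulA Q a (eSeq Q a p) (eSeq Q a q)) (eSeq Q a (p + q))
  | 0, p => (hj_mulA Q a _ _).trans (unit_right Q a (eSeq Q a p) h2)
  | 1, 0 => (hj_mulA Q a _ _).trans (unit_left Q a Q.one h1)
  | 1, (p + 1) => HJ.refl _
  | (q + 2), p =>
    (mulA_assoc Q a h3 (eSeq Q a p) (eSeq Q a (q + 1)) Q.one).symm.trans
      (mulA_congr Q (e_mul h1 h2 h3 (q + 1) p) (HJ.refl Q.one))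

theorem main_lemma
    (h1 : HJ C (Q.γ (m := ![0, 1]) a (pfam (default : C 0) Q.one)) Q.one)
    (h2 : HJ C (Q.γ (m := ![1, 0]) a (pfam Q.one (default : C 0))) Q.one)
    (h3 : HJ C (Q.γ (m := ![1, 2]) a (pfam Q.one a)) (Q.γ (m := ![2, 1]) a (pfam a Q.one))) :
    ∀ (k : ℕ) (m : Fin k → ℕ),
      HJ C (Q.γ (eSeq Q a k) fun i => eSeq Q a (m i)) (eSeq Q a (∑ i, m i))
  | 0, m => hj_γ_zeroary Q _ _ (by simp) _
  | 1, m => (hj_γ_one Q _).trans (hj_e (eSeq Q a) (by simp))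
  | (k + 2), m => by
    have hs : (∑ i, (![k + 1, 1] : Fin 2 → ℕ) i) = k + 2 := by simp [Fin.sum_univ_two]
    set m' : Fin (∑ i, (![k + 1, 1] : Fin 2 → ℕ) i) → ℕ := fun j => m (finCongr hs j) with hm'
    have S1 : HJ C (Q.γ (eSeq Q a (k + 2)) fun i => eSeq Q a (m i))
        (Q.γ (Q.γ (m := ![k + 1, 1]) a (pfam (eSeq Q a (k + 1)) Q.one))
          (fun j => eSeq Q a (m' j))) := by
      refine hj_γ Q hs.symm
        (hj_cast (sum2 (k + 1) 1) (Q.γ (m := ![k + 1, 1]) a (pfam (eSeq Q a (k + 1)) Q.one))) ?_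
      intro i
      exact HJ.refl _
    have S2 := hj_assoc Q (n := fun j => m' j) a (pfam (eSeq Q a (k + 1)) Q.one)
      (fun j => eSeq Q a (m' j))
    have c0 : HJ C
        (Q.γ (eSeq Q a (k + 1))
          fun t : Fin (k + 1) => eSeq Q a (m' (finSigmaEquiv 2 ![k + 1, 1] ⟨0, t⟩)))
        (eSeq Q a (∑ t : Fin (k + 1), m' (finSigmaEquiv 2 ![k + 1, 1] ⟨0, t⟩))) :=
      main_lemma h1 h2 h3 (k + 1) _
    have c1 : HJ C
        (Q.γ Q.one (fun t : Fin 1 => eSeq Q a (m' (finSigmaEquiv 2 ![k + 1, 1] ⟨1, t⟩))))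
        (eSeq Q a (m' (finSigmaEquiv 2 ![k + 1, 1] ⟨1, ⟨0, by simp⟩⟩))) := hj_γ_one Q _
    have S3 : HJ C
        (Q.γ a fun i => Q.γ ((pfam (eSeq Q a (k + 1)) Q.one) i)
          fun t => eSeq Q a (m' (finSigmaEquiv 2 ![k + 1, 1] ⟨i, t⟩)))
        (Q.γ (m := ![∑ t : Fin (k + 1), m' (finSigmaEquiv 2 ![k + 1, 1] ⟨0, t⟩),
            m' (finSigmaEquiv 2 ![k + 1, 1] ⟨1, ⟨0, by simp⟩⟩)]) a
          (pfam (eSeq Q a (∑ t : Fin (k + 1), m' (finSigmaEquiv 2 ![k + 1, 1] ⟨0, t⟩)))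
            (eSeq Q a (m' (finSigmaEquiv 2 ![k + 1, 1] ⟨1, ⟨0, by simp⟩⟩))))) := by
      refine hj_γ Q rfl (HJ.refl a) ?_
      intro i
      fin_cases i
      · exact c0
      · exact c1
    have S4 := (hj_mulA Q a
        (eSeq Q a (∑ t : Fin (k + 1), m' (finSigmaEquiv 2 ![k + 1, 1] ⟨0, t⟩)))
        (eSeq Q a (m' (finSigmaEquiv 2 ![k + 1, 1] ⟨1, ⟨0, by simp⟩⟩)))).symm.trans
      (e_mul Q a h1 h2 h3 _ _)
    have hsum : ((∑ t : Fin (k + 1), m' (finSigmaEquiv 2 ![k + 1, 1] ⟨0, t⟩)) +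
        m' (finSigmaEquiv 2 ![k + 1, 1] ⟨1, ⟨0, by simp⟩⟩)) = ∑ i, m i := by
      have e1 : (∑ i, m i) = ∑ j, m' j := (Equiv.sum_comp (finCongr hs) m).symm
      rw [e1, ← Equiv.sum_comp (finSigmaEquiv 2 ![k + 1, 1]) m', ← Finset.univ_sigma_univ,
        Finset.sum_sigma,
        Fin.sum_univ_two fun i : Fin 2 =>
          ∑ t : Fin (![k + 1, 1] i), m' (finSigmaEquiv 2 ![k + 1, 1] ⟨i, t⟩)]
      congr 1
    exact S1.trans (S2.trans (S3.trans (S4.trans (hj_e (eSeq Q a) hsum))))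

end OperadMain

/-- For a topological operad `𝒞`, there exists a basepoint of `𝒞` (a sequence `{e_k}` with
`e_1 = 1` and `γ(e_k; e_{m_1}, …, e_{m_k}) ∼ e_m`, where `∼` means "in the same path
component") if and only if there exists `a ∈ 𝒞(2)` with `d_1 a ∼ d_2 a ∼ 1` in `𝒞(1)` and
`γ(a; 1, a) ∼ γ(a; a, 1)`. -/
theorem topOperad_basepoint_iff (C : ℕ → Type) [∀ n, TopologicalSpace (C n)]
    [Unique (C 0)] (Q : TopOperad C) :
    (∃ e : ∀ k, C k, e 1 = Q.one ∧
        ∀ (k : ℕ) (m : Fin k → ℕ), Joined (Q.γ (e k) fun i => e (m i)) (e (∑ i, m i))) ↔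
    ∃ a : C 2,
      Joined
        (cast (congrArg C (show (∑ j, (![0, 1] : Fin 2 → ℕ) j) = 1 by simp [Fin.sum_univ_two]))
          (Q.γ (m := ![0, 1]) a (Fin.cons (default : C 0) (Fin.cons Q.one fun j => j.elim0))))
        Q.one ∧
      Joined
        (cast (congrArg C (show (∑ j, (![1, 0] : Fin 2 → ℕ) j) = 1 by simp [Fin.sum_univ_two]))
          (Q.γ (m := ![1, 0]) a (Fin.cons Q.one (Fin.cons (default : C 0) fun j => j.elim0))))
        Q.one ∧
      Joined
        (cast (congrArg C (show (∑ j, (![1, 2] : Fin 2 → ℕ) j) = 3 by simp [Fin.sum_univ_two]))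
          (Q.γ (m := ![1, 2]) a (Fin.cons Q.one (Fin.cons a fun j => j.elim0))))
        (cast (congrArg C (show (∑ j, (![2, 1] : Fin 2 → ℕ) j) = 3 by simp [Fin.sum_univ_two]))
          (Q.γ (m := ![2, 1]) a (Fin.cons a (Fin.cons Q.one fun j => j.elim0)))) := by
  constructor
  · rintro ⟨e, he1, hc⟩
    have hone : HJ C (e 1) Q.one := by rw [he1]; exact HJ.refl _
    have H01 : HJ C (Q.γ (m := ![0, 1]) (e 2)
        (Fin.cons (default : C 0) (Fin.cons Q.one fun j => j.elim0))) Q.one := by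
      have hfam : (fun i => e ((![0, 1] : Fin 2 → ℕ) i)) =
          Fin.cons (default : C 0) (Fin.cons Q.one fun j => j.elim0) := by
        funext i
        fin_cases i
        · exact Subsingleton.elim (α := C 0) _ _
        · exact he1
      have j := hc 2 ![0, 1]
      rw [hfam] at j
      exact HJ.trans ⟨rfl, j⟩
        ((hj_e e (by simp [Fin.sum_univ_two] :
          (∑ i, (![0, 1] : Fin 2 → ℕ) i) = 1)).trans hone)
    have H10 : HJ C (Q.γ (m := ![1, 0]) (e 2)
        (Fin.cons Q.one (Fin.cons (default : C 0) fun j => j.elim0))) Q.one := by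
      have hfam : (fun i => e ((![1, 0] : Fin 2 → ℕ) i)) =
          Fin.cons Q.one (Fin.cons (default : C 0) fun j => j.elim0) := by
        funext i
        fin_cases i
        · exact he1
        · exact Subsingleton.elim (α := C 0) _ _
      have j := hc 2 ![1, 0]
      rw [hfam] at j
      exact HJ.trans ⟨rfl, j⟩
        ((hj_e e (by simp [Fin.sum_univ_two] :
          (∑ i, (![1, 0] : Fin 2 → ℕ) i) = 1)).trans hone)
    have H12 : HJ C (Q.γ (m := ![1, 2]) (e 2)
        (Fin.cons Q.one (Fin.cons (e 2) fun j => j.elim0))) (e 3) := by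
      have hfam : (fun i => e ((![1, 2] : Fin 2 → ℕ) i)) =
          Fin.cons Q.one (Fin.cons (e 2) fun j => j.elim0) := by
        funext i
        fin_cases i
        · exact he1
        · rfl
      have j := hc 2 ![1, 2]
      rw [hfam] at j
      exact HJ.trans ⟨rfl, j⟩ (hj_e e (by simp [Fin.sum_univ_two]))
    have H21 : HJ C (Q.γ (m := ![2, 1]) (e 2)
        (Fin.cons (e 2) (Fin.cons Q.one fun j => j.elim0))) (e 3) := by
      have hfam : (fun i => e ((![2, 1] : Fin 2 → ℕ) i)) =
          Fin.cons (e 2) (Fin.cons Q.one fun j => j.elim0) := by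
        funext i
        fin_cases i
        · rfl
        · exact he1
      have j := hc 2 ![2, 1]
      rw [hfam] at j
      exact HJ.trans ⟨rfl, j⟩ (hj_e e (by simp [Fin.sum_univ_two]))
    refine ⟨e 2, ?_, ?_, ?_⟩
    · exact hj_joined_cast (by simp [Fin.sum_univ_two]) rfl H01
    · exact hj_joined_cast (by simp [Fin.sum_univ_two]) rfl H10
    · exact hj_joined_cast (by simp [Fin.sum_univ_two]) (by simp [Fin.sum_univ_two])
        (H12.trans H21.symm)
  · rintro ⟨a, j1, j2, j3⟩
    have h1 : HJ C (Q.γ (m := ![0, 1]) a (pfam (default : C 0) Q.one)) Q.one :=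
      HJ.trans (hj_of_joined_cast (by simp [Fin.sum_univ_two]) rfl j1) (HJ.refl _)
    have h2 : HJ C (Q.γ (m := ![1, 0]) a (pfam Q.one (default : C 0))) Q.one :=
      HJ.trans (hj_of_joined_cast (by simp [Fin.sum_univ_two]) rfl j2) (HJ.refl _)
    have h3 : HJ C (Q.γ (m := ![1, 2]) a (pfam Q.one a))
        (Q.γ (m := ![2, 1]) a (pfam a Q.one)) :=
      hj_of_joined_cast (by simp [Fin.sum_univ_two]) (by simp [Fin.sum_univ_two]) j3
    exact ⟨eSeq Q a, rfl, fun k m => (main_lemma Q a h1 h2 h3 k m).joined⟩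
end

section
/- For a group operad 𝒢 with structure maps d_i and s_i induced by the operad structure, the multiplication interacts with faces and degeneracies by d_i(ab) = (d_i a)(d_{a(i)} b) and s_i(ab) = (s_i a)(s_{a(i)} b), where a(i) = (π a)(i). -/
/-- The face maps of a group operad: `d_i a = γ(a; e_1, …, e_0, …, e_1)` with `e_0 ∈ G 0`
inserted in the `i`-th slot. -/
def GroupOperad.face {G : ℕ → Type} [∀ n, Group (G n)] (P : GroupOperad G) {n : ℕ}
    (i : Fin (n + 1)) (a : G (n + 1)) : G n :=
  cast (congrArg G
      (show (∑ j, Function.update (fun _ : Fin (n + 1) => 1) i 0 j) = n by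
        rw [Finset.sum_update_of_mem (Finset.mem_univ i)]
        simp [Finset.sdiff_singleton_eq_erase, Finset.card_erase_of_mem]))
    (P.γ (m := Function.update (fun _ => 1) i 0) a fun j =>
      if h : j = i then
        cast (congrArg G (show (0 : ℕ) = _ by rw [h, Function.update_self])) (1 : G 0)
      else
        cast (congrArg G (show (1 : ℕ) = _ by rw [Function.update_of_ne h])) (1 : G 1))

/-- The degeneracy maps of a group operad: `s_i a = γ(a; e_1, …, e_2, …, e_1)` with `e_2 ∈ G 2`
inserted in the `i`-th slot. -/
def GroupOperad.degen {G : ℕ → Type} [∀ n, Group (G n)] (P : GroupOperad G) {n : ℕ}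
    (i : Fin n) (a : G n) : G (n + 1) :=
  cast (congrArg G
      (show (∑ j, Function.update (fun _ : Fin n => 1) i 2 j) = n + 1 by
        rw [Finset.sum_update_of_mem (Finset.mem_univ i)]
        have := i.pos
        simp [Finset.sdiff_singleton_eq_erase, Finset.card_erase_of_mem]
        omega))
    (P.γ (m := Function.update (fun _ => 1) i 2) a fun j =>
      if h : j = i then
        cast (congrArg G (show (2 : ℕ) = _ by rw [h, Function.update_self])) (1 : G 2)
      else
        cast (congrArg G (show (1 : ℕ) = _ by rw [Function.update_of_ne h])) (1 : G 1))

section CastIndex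

variable {ι : Type*} {G : ι → Type*}

lemma cast_congrArg_one [∀ i, One (G i)] {p q : ι} (h : p = q) :
    cast (congrArg G h) (1 : G p) = 1 := by
  subst h; rfl

lemma cast_congrArg_mul [∀ i, Mul (G i)] {p q : ι} (h : p = q) (x y : G p) :
    cast (congrArg G h) (x * y) = cast (congrArg G h) x * cast (congrArg G h) y := by
  subst h; rfl

end CastIndex

lemma Fin.sum_update_one_add_one {k : ℕ} (i : Fin k) (c : ℕ) :
    ∑ j, Function.update (fun _ : Fin k => 1) i c j + 1 = k + c := by
  rw [Finset.sum_update_of_mem (Finset.mem_univ i)]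
  simp [Finset.sdiff_singleton_eq_erase, Finset.card_erase_of_mem]
  have := i.pos
  omega

namespace GroupOperad

variable {G : ℕ → Type} [∀ n, Group (G n)] (P : GroupOperad G)

/-- `γ(a; e_1, …, e_1, e_c, e_1, …, e_1)` with the unit `e_c ∈ G c` in slot `i`: both `d_i`
(`c = 0`) and `s_i` (`c = 2`) are of this form. -/
def insertUnit {k : ℕ} (c : ℕ) (i : Fin k) (a : G k) :
    G (∑ j, Function.update (fun _ : Fin k => 1) i c j) :=
  P.γ a fun _ => 1

lemma cast_γ_one_congr {k s : ℕ} {m m' : Fin k → ℕ} (hm : m = m') (a : G k)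
    (h : ∑ i, m i = s) (h' : ∑ i, m' i = s) :
    cast (congrArg G h) (P.γ a fun i => (1 : G (m i))) =
      cast (congrArg G h') (P.γ a fun i => (1 : G (m' i))) := by
  subst hm; rfl

lemma γ_mul_one {k : ℕ} {m : Fin k → ℕ} (a b : G k) :
    P.γ (a * b) (fun i => (1 : G (m i))) =
      P.γ a (fun _ => 1) *
        cast (congrArg G (Equiv.sum_comp (P.π k a).symm m))
          (P.γ (m := fun i => m ((P.π k a).symm i)) b fun _ => 1) := by
  simpa only [mul_one] using P.crossed (m := m) a b (fun _ => 1) (fun _ => 1)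

lemma insertUnit_mul {k s : ℕ} (c : ℕ) (i : Fin k) (a b : G k)
    (hs : ∑ j, Function.update (fun _ : Fin k => 1) i c j = s)
    (ht : ∑ j, Function.update (fun _ : Fin k => 1) (P.π k a i) c j = s) :
    cast (congrArg G hs) (P.insertUnit c i (a * b)) =
      cast (congrArg G hs) (P.insertUnit c i a) *
        cast (congrArg G ht) (P.insertUnit c (P.π k a i) b) := by
  have hm : (fun j => Function.update (fun _ : Fin k => 1) i c ((P.π k a).symm j)) =
      Function.update (fun _ => 1) (P.π k a i) c :=
    Function.update_comp_equiv (fun _ : Fin k => 1) (P.π k a).symm i c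
  unfold insertUnit
  rw [γ_mul_one, cast_congrArg_mul hs, cast_cast]
  exact congrArg (_ * ·) (P.cast_γ_one_congr hm b ((Equiv.sum_comp _ _).trans hs) ht)

lemma face_eq_cast_insertUnit {n : ℕ} (i : Fin (n + 1)) (a : G (n + 1))
    (hs : ∑ j, Function.update (fun _ : Fin (n + 1) => 1) i 0 j = n) :
    P.face i a = cast (congrArg G hs) (P.insertUnit 0 i a) := by
  unfold face insertUnit
  congr 2
  funext j
  split_ifs with h <;> exact cast_congrArg_one (by simp [h])

lemma degen_eq_cast_insertUnit {n : ℕ} (i : Fin n) (a : G n)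
    (hs : ∑ j, Function.update (fun _ : Fin n => 1) i 2 j = n + 1) :
    P.degen i a = cast (congrArg G hs) (P.insertUnit 2 i a) := by
  unfold degen insertUnit
  congr 2
  funext j
  split_ifs with h <;> exact cast_congrArg_one (by simp [h])

end GroupOperad

/-- For a group operad `𝒢` with the simplicial structure maps `d_i`, `s_i` induced by the operad
structure, multiplication interacts with faces and degeneracies by
`d_i(ab) = (d_i a)(d_{a(i)} b)` and `s_i(ab) = (s_i a)(s_{a(i)} b)`, where `a(i) = (π a)(i)`. -/
theorem groupOperad_face_degen_mul (G : ℕ → Type) [∀ n, Group (G n)] (P : GroupOperad G) :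
    (∀ (n : ℕ) (i : Fin (n + 1)) (a b : G (n + 1)),
        P.face i (a * b) = P.face i a * P.face (P.π (n + 1) a i) b) ∧
    (∀ (n : ℕ) (i : Fin n) (a b : G n),
        P.degen i (a * b) = P.degen i a * P.degen (P.π n a i) b) := by
  refine ⟨fun n i a b => ?_, fun n i a b => ?_⟩
  · have hs (j : Fin (n + 1)) : ∑ l, Function.update (fun _ : Fin (n + 1) => 1) j 0 l = n := by
      have := Fin.sum_update_one_add_one j 0
      omega
    simp only [P.face_eq_cast_insertUnit _ _ (hs _)]
    exact P.insertUnit_mul 0 i a b (hs _) (hs _)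
  · have hs (j : Fin n) : ∑ l, Function.update (fun _ : Fin n => 1) j 2 l = n + 1 := by
      have := Fin.sum_update_one_add_one j 2
      omega
    simp only [P.degen_eq_cast_insertUnit _ _ (hs _)]
    exact P.insertUnit_mul 2 i a b (hs _) (hs _)
end

section
/- Let 𝒢 be a group operad, ℋ a non-crossed normal sub group operad of 𝒢 (each H_n ⊴ G_n and π|_ℋ trivial). Then the composition γ of 𝒢 descends to well-defined maps γ: G_k/H_k × G_{m_1}/H_{m_1} × ... × G_{m_k}/H_{m_k} → G_m/H_m, and the quotient 𝒢/ℋ with the induced π is a group operad. -/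
/-- Let `𝒢` be a group operad and `ℋ` a non-crossed normal sub group operad of `𝒢`
(each `H n ⊴ G n`, `π` trivial on `ℋ`, and `ℋ` closed under `γ`).  Then the composition `γ`
of `𝒢` descends to well-defined maps on the quotients `G n ⧸ H n`, and the quotient `𝒢/ℋ`
with the induced `π` is a group operad. -/
theorem quotient_groupOperad (G : ℕ → Type) [∀ n, Group (G n)] (P : GroupOperad G)
    (H : ∀ n, Subgroup (G n)) [∀ n, (H n).Normal]
    (hclosed : ∀ {k : ℕ} {m : Fin k → ℕ} (a : G k) (b : (i : Fin k) → G (m i)),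
      a ∈ H k → (∀ i, b i ∈ H (m i)) → P.γ a b ∈ H (∑ i, m i))
    (hnoncrossed : ∀ (n : ℕ), ∀ h ∈ H n, P.π n h = 1) :
    ∃ Q : GroupOperad fun n => G n ⧸ H n,
      (∀ (k : ℕ) (m : Fin k → ℕ) (a : G k) (b : (i : Fin k) → G (m i)),
          Q.γ (QuotientGroup.mk a) (fun i => QuotientGroup.mk (b i)) =
            QuotientGroup.mk (P.γ a b)) ∧
      (∀ (n : ℕ) (g : G n), Q.π n (QuotientGroup.mk g) = P.π n g) := by
  classical
  have cast_mk : ∀ {n n' : ℕ} (h : n = n') (x : G n),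
      cast (congrArg (fun n => G n ⧸ H n) h) (QuotientGroup.mk x) =
        QuotientGroup.mk (cast (congrArg G h) x) := by
    intro n n' h x; subst h; rfl
  have cast_mem : ∀ {n n' : ℕ} (h : n = n') (x : G n), x ∈ H n →
      cast (congrArg G h) x ∈ H n' := by
    intro n n' h x hx; subst h; exact hx
  have wd : ∀ {k : ℕ} {m : Fin k → ℕ} (a a' : G k) (b b' : (i : Fin k) → G (m i)),
      (QuotientGroup.mk a : G k ⧸ H k) = QuotientGroup.mk a' →
      (∀ i, (QuotientGroup.mk (b i) : G (m i) ⧸ H (m i)) = QuotientGroup.mk (b' i)) →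
      (QuotientGroup.mk (P.γ a b) : G (∑ i, m i) ⧸ H (∑ i, m i)) =
        QuotientGroup.mk (P.γ a' b') := by
    intro k m a a' b b' ha hb
    rw [QuotientGroup.eq] at ha ⊢
    have hb' : ∀ i, (b i)⁻¹ * b' i ∈ H (m i) := fun i => (QuotientGroup.eq).mp (hb i)
    have key : P.γ a' b' = P.γ a b * cast (congrArg G (Equiv.sum_comp (P.π k a).symm m))
        (P.γ (a⁻¹ * a') fun i => (b ((P.π k a).symm i))⁻¹ * b' ((P.π k a).symm i)) := by
      have := P.crossed a (a⁻¹ * a') b (fun i => (b i)⁻¹ * b' i)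
      simpa [mul_inv_cancel_left] using this
    rw [key, ← mul_assoc, inv_mul_cancel, one_mul]
    exact cast_mem (Equiv.sum_comp (P.π k a).symm m) _ (hclosed _ _ ha (fun i => hb' _))
  let mkγ : ∀ {k : ℕ} {m : Fin k → ℕ}, (G k ⧸ H k) → ((i : Fin k) → G (m i) ⧸ H (m i)) →
      G (∑ i, m i) ⧸ H (∑ i, m i) :=
    fun x y => QuotientGroup.mk (P.γ x.out fun i => (y i).out)
  have γmk : ∀ {k : ℕ} {m : Fin k → ℕ} (a : G k) (b : (i : Fin k) → G (m i)),
      mkγ (QuotientGroup.mk a) (fun i => QuotientGroup.mk (b i)) = QuotientGroup.mk (P.γ a b) :=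
    fun a b => wd _ _ _ _ (by simp) (fun i => by simp)
  let Qπ : ∀ n, (G n ⧸ H n) →* Equiv.Perm (Fin n) :=
    fun n => QuotientGroup.lift (H n) (P.π n) (fun h hh => hnoncrossed n h hh)
  refine ⟨⟨Qπ, fun {k m} x y => mkγ x y, ?_, ?_, ?_, ?_⟩, fun k m a b => γmk a b,
    fun n g => rfl⟩
  · intro n b
    obtain ⟨b, rfl⟩ := QuotientGroup.mk_surjective b
    have h1 : (1 : G 1 ⧸ H 1) = QuotientGroup.mk 1 := rfl
    calc mkγ (1 : G 1 ⧸ H 1) (fun _ : Fin 1 => (QuotientGroup.mk b : G n ⧸ H n))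
        = QuotientGroup.mk (P.γ (1 : G 1) fun _ : Fin 1 => b) := γmk 1 (fun _ => b)
      _ = QuotientGroup.mk (cast (congrArg G (Eq.symm (by simp))) b) := by rw [P.one_γ]
      _ = cast (congrArg (fun n => G n ⧸ H n) (Eq.symm (by simp))) (QuotientGroup.mk b) := by
          rw [cast_mk]
          simp
  · intro k a
    obtain ⟨a, rfl⟩ := QuotientGroup.mk_surjective a
    calc mkγ (QuotientGroup.mk a) (fun _ : Fin k => (1 : G 1 ⧸ H 1))
        = QuotientGroup.mk (P.γ a fun _ : Fin k => (1 : G 1)) := γmk a (fun _ => 1)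
      _ = QuotientGroup.mk (cast (congrArg G (Eq.symm (by simp))) a) := by rw [P.γ_one]
      _ = cast (congrArg (fun n => G n ⧸ H n) (Eq.symm (by simp))) (QuotientGroup.mk a) := by
          rw [cast_mk]
          simp
  · intro k m a a' b b'
    obtain ⟨a, rfl⟩ := QuotientGroup.mk_surjective a
    obtain ⟨a', rfl⟩ := QuotientGroup.mk_surjective a'
    have hb : b = fun i => QuotientGroup.mk (b i).out := funext fun i => (Quotient.out_eq _).symm
    have hb' : b' = fun i => QuotientGroup.mk (b' i).out :=
      funext fun i => (Quotient.out_eq _).symm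
    rw [hb, hb']
    set c := fun i => (b i).out
    set c' := fun i => (b' i).out
    calc mkγ (QuotientGroup.mk a * QuotientGroup.mk a')
          (fun i => QuotientGroup.mk (c i) * QuotientGroup.mk (c' i))
        = QuotientGroup.mk (P.γ (a * a') fun i => c i * c' i) :=
          γmk (a * a') (fun i => c i * c' i)
      _ = QuotientGroup.mk (P.γ a c * cast (congrArg G (Equiv.sum_comp (P.π k a).symm m))
            (P.γ a' fun i => c' ((P.π k a).symm i))) := by rw [P.crossed]
      _ = QuotientGroup.mk (P.γ a c) *
            QuotientGroup.mk (cast (congrArg G (Equiv.sum_comp (P.π k a).symm m))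
              (P.γ a' fun i => c' ((P.π k a).symm i))) := rfl
      _ = QuotientGroup.mk (P.γ a c) *
            cast (congrArg (fun n => G n ⧸ H n) (Equiv.sum_comp (P.π k a).symm m))
              (QuotientGroup.mk (P.γ a' fun i => c' ((P.π k a).symm i))) := by
          rw [cast_mk]
          exact Equiv.sum_comp (P.π k a).symm m
      _ = mkγ (QuotientGroup.mk a) (fun i => QuotientGroup.mk (c i)) *
            cast (congrArg (fun n => G n ⧸ H n) (Equiv.sum_comp (P.π k a).symm m))
              (mkγ (QuotientGroup.mk a')
                (fun i => QuotientGroup.mk (c' ((P.π k a).symm i)))) := by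
          rw [γmk a c, γmk a' (fun i => c' ((P.π k a).symm i))]
  · intro k m a b
    obtain ⟨a, rfl⟩ := QuotientGroup.mk_surjective a
    have hb : b = fun i => QuotientGroup.mk (b i).out := funext fun i => (Quotient.out_eq _).symm
    rw [hb]
    set c := fun i => (b i).out
    calc (Qπ (∑ i, m i)) (mkγ (QuotientGroup.mk a) (fun i => QuotientGroup.mk (c i)))
        = (Qπ (∑ i, m i)) (QuotientGroup.mk (P.γ a c)) := by rw [γmk a c]
      _ = P.π (∑ i, m i) (P.γ a c) := rfl
      _ = blockComp (P.π k a) (fun i => P.π (m i) (c i)) := P.π_γ a c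
      _ = blockComp ((Qπ k) (QuotientGroup.mk a))
            (fun i => (Qπ (m i)) (QuotientGroup.mk (c i))) := rfl
end

section
/- Let 𝒢 be a group operad acting on a topological operad 𝒞, and let ℋ be a non-crossed sub group operad of 𝒢. Then the levelwise quotient 𝒞/ℋ = {𝒞(n)/H_n} inherits a well-defined operad composition from 𝒞, making it a nonsymmetric operad; if moreover ℋ is normal in 𝒢, then 𝒞/ℋ is a 𝒢/ℋ-operad with action gH_k · H_k a = H_k(ga), and (𝒞/ℋ)/(𝒢/ℋ) = 𝒞/𝒢. -/
/-- An action of a group operad `𝒢` on a topological operad `𝒞`: a sequence of continuous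
left actions of `G n` on `𝒞 n` satisfying the equivariance property
`γ(σa; τ_1 b_1, …, τ_k b_k) = γ(σ; τ_1, …, τ_k)·γ(a; b_{σ⁻¹(1)}, …, b_{σ⁻¹(k)})`. -/
structure OperadAction (G : ℕ → Type) [∀ n, Group (G n)]
    (C : ℕ → Type) [∀ n, TopologicalSpace (C n)] [Unique (C 0)]
    (P : GroupOperad G) (Q : TopOperad C) where
  act : ∀ n, G n → C n → C n
  one_act : ∀ (n : ℕ) (x : C n), act n 1 x = x
  mul_act : ∀ (n : ℕ) (g h : G n) (x : C n), act n (g * h) x = act n g (act n h x)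
  continuous_act : ∀ (n : ℕ) (g : G n), Continuous (act n g)
  equivariance : ∀ {k : ℕ} {m : Fin k → ℕ} (σ : G k) (τ : (i : Fin k) → G (m i))
      (a : C k) (b : (i : Fin k) → C (m i)),
      Q.γ (act k σ a) (fun i => act (m i) (τ i) (b i)) =
        act _ (P.γ σ τ)
          (cast (congrArg C (Equiv.sum_comp (P.π k σ).symm m))
            (Q.γ a fun i => b ((P.π k σ).symm i)))

/-- The orbit relation of the action of a family of subgroups `H n ≤ G n` on `𝒞 n`. -/
def orbRel {G : ℕ → Type} [∀ n, Group (G n)] {C : ℕ → Type} [∀ n, TopologicalSpace (C n)]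
    [Unique (C 0)] {P : GroupOperad G} {Q : TopOperad C} (A : OperadAction G C P Q)
    (H : ∀ n, Subgroup (G n)) (n : ℕ) (x y : C n) : Prop :=
  ∃ h : G n, h ∈ H n ∧ A.act n h x = y

/-- Let `𝒢` act on a topological operad `𝒞` and let `ℋ` be a non-crossed sub group operad of
`𝒢`.  Then the levelwise quotient `𝒞/ℋ` inherits a well-defined operad composition, making it
a nonsymmetric operad; if moreover `ℋ` is normal in `𝒢`, then `𝒞/ℋ` is a `𝒢/ℋ`-operad with
action `gH·(Hx) = H(gx)`, and `(𝒞/ℋ)/(𝒢/ℋ) = 𝒞/𝒢`. -/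
theorem quotient_operad (G : ℕ → Type) [∀ n, Group (G n)]
    (C : ℕ → Type) [∀ n, TopologicalSpace (C n)] [Unique (C 0)]
    (P : GroupOperad G) (Q : TopOperad C) (A : OperadAction G C P Q)
    (H : ∀ n, Subgroup (G n))
    (hclosed : ∀ {k : ℕ} {m : Fin k → ℕ} (a : G k) (b : (i : Fin k) → G (m i)),
      a ∈ H k → (∀ i, b i ∈ H (m i)) → P.γ a b ∈ H (∑ i, m i))
    (hnoncrossed : ∀ (n : ℕ), ∀ h ∈ H n, P.π n h = 1) :
    ∃ γq : ∀ (k : ℕ) (m : Fin k → ℕ),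
        Quot (orbRel A H k) → ((i : Fin k) → Quot (orbRel A H (m i))) →
          Quot (orbRel A H (∑ i, m i)),
      (∀ (k : ℕ) (m : Fin k → ℕ) (a : C k) (b : (i : Fin k) → C (m i)),
          γq k m (Quot.mk _ a) (fun i => Quot.mk _ (b i)) = Quot.mk _ (Q.γ a b)) ∧
      ((∀ n, (H n).Normal) →
        ∃ actq : ∀ n, G n → Quot (orbRel A H n) → Quot (orbRel A H n),
          (∀ (n : ℕ) (g : G n) (x : C n), actq n g (Quot.mk _ x) = Quot.mk _ (A.act n g x)) ∧
          (∀ (n : ℕ), ∀ h ∈ H n, ∀ x, actq n h x = x) ∧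
          (∀ (n : ℕ) (g g' : G n) (x : Quot (orbRel A H n)),
              actq n (g * g') x = actq n g (actq n g' x)) ∧
          (∀ n : ℕ, ∃ e : Quot (fun x y : Quot (orbRel A H n) => ∃ g : G n, actq n g x = y) ≃
                Quot (fun x y : C n => ∃ g : G n, A.act n g x = y),
              ∀ x : C n, e (Quot.mk _ (Quot.mk _ x)) = Quot.mk _ x)) := by
  classical
  -- the key equivariance computation when the acting element is non-crossed
  have key : ∀ {k : ℕ} {m : Fin k → ℕ} (σ : G k) (τ : (i : Fin k) → G (m i))
      (a : C k) (b : (i : Fin k) → C (m i)), P.π k σ = 1 →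
      Q.γ (A.act k σ a) (fun i => A.act (m i) (τ i) (b i)) =
        A.act _ (P.γ σ τ) (Q.γ a b) := by
    intro k m σ τ a b hπ
    rw [A.equivariance σ τ a b, hπ]
    rfl
  have hrefl : ∀ (n : ℕ) (x : C n), orbRel A H n x x :=
    fun n x => ⟨1, (H n).one_mem, A.one_act n x⟩
  have hsymm : ∀ (n : ℕ) (x y : C n), orbRel A H n x y → orbRel A H n y x := by
    rintro n x y ⟨h, hh, rfl⟩
    exact ⟨h⁻¹, (H n).inv_mem hh, by rw [← A.mul_act, inv_mul_cancel, A.one_act]⟩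
  have htrans : ∀ (n : ℕ) (x y z : C n), orbRel A H n x y → orbRel A H n y z →
      orbRel A H n x z := by
    rintro n x y z ⟨h, hh, rfl⟩ ⟨h', hh', rfl⟩
    exact ⟨h' * h, (H n).mul_mem hh' hh, A.mul_act n h' h x⟩
  have hequiv : ∀ n : ℕ, Equivalence (orbRel A H n) := fun n =>
    ⟨hrefl n, fun {a b} => hsymm n a b, fun {a b c} => htrans n a b c⟩
  have hexact : ∀ (n : ℕ) (x y : C n),
      Quot.mk (orbRel A H n) x = Quot.mk (orbRel A H n) y → orbRel A H n x y := by
    intro n x y h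
    exact ((hequiv n).eqvGen_iff).mp (Quot.eqvGen_exact h)
  have hgamma : ∀ {k : ℕ} {m : Fin k → ℕ} (a a' : C k) (b b' : (i : Fin k) → C (m i)),
      orbRel A H k a a' → (∀ i, orbRel A H (m i) (b i) (b' i)) →
      orbRel A H (∑ i, m i) (Q.γ a b) (Q.γ a' b') := by
    rintro k m a a' b b' ⟨h, hh, ha⟩ hb
    choose τ hτ hact using hb
    refine ⟨P.γ h τ, hclosed h τ hh hτ, ?_⟩
    rw [← key h τ a b (hnoncrossed k h hh), ha]
    congr 1
    funext i
    exact hact i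
  refine ⟨fun k m x f =>
    Quot.lift (fun a => Quot.mk _ (Q.γ a fun i => (f i).out))
      (fun a a' hr => Quot.sound (hgamma a a' _ _ hr fun i => hrefl _ _)) x, ?_, ?_⟩
  · intro k m a b
    refine Quot.sound (hgamma a a _ _ (hrefl _ _) fun i => ?_)
    exact hexact _ _ _ (Quot.out_eq (Quot.mk (orbRel A H (m i)) (b i)))
  · intro hnormal
    have hactq : ∀ (n : ℕ) (g : G n) (x y : C n), orbRel A H n x y →
        orbRel A H n (A.act n g x) (A.act n g y) := by
      rintro n g x y ⟨h, hh, rfl⟩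
      refine ⟨g * h * g⁻¹, (hnormal n).conj_mem h hh g, ?_⟩
      rw [← A.mul_act, ← A.mul_act]
      congr 1
      group
    refine ⟨fun n g => Quot.lift (fun x => Quot.mk _ (A.act n g x))
      (fun x y hr => Quot.sound (hactq n g x y hr)), fun n g x => rfl, ?_, ?_, ?_⟩
    · intro n h hh x
      induction x using Quot.ind with
      | mk a => exact Quot.sound (hsymm _ _ _ ⟨h, hh, rfl⟩)
    · intro n g g' x
      induction x using Quot.ind with
      | mk a => exact congrArg (Quot.mk _) (A.mul_act n g g' a)
    · intro n
      refine ⟨{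
        toFun := Quot.lift
          (Quot.lift (fun x => Quot.mk (fun x y : C n => ∃ g : G n, A.act n g x = y) x)
            (fun x y hr => Quot.sound ⟨hr.choose, hr.choose_spec.2⟩))
          ?_
        invFun := Quot.lift (fun x => Quot.mk _ (Quot.mk _ x)) ?_
        left_inv := ?_
        right_inv := ?_ }, fun x => rfl⟩
      · rintro x y ⟨g, rfl⟩
        induction x using Quot.ind with
        | mk a => exact Quot.sound ⟨g, rfl⟩
      · rintro x y ⟨g, rfl⟩
        exact Quot.sound ⟨g, rfl⟩
      · intro x
        induction x using Quot.ind with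
        | mk a =>
          induction a using Quot.ind with
          | mk b => rfl
      · intro x
        induction x using Quot.ind with
        | mk a => rfl
end
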